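/- Let G = (V,E) be a graph and construct G̃ with vertex set V ∪ V' ∪ V'' (where V' and V'' are disjoint copies of V), edges: all edges of G on V, all edges between pairs of vertices of V' (V' induces a clique), the matching {vv' : v ∈ V}, and the matching {v'v'' : v ∈ V}. Then a subset X ⊆ V is an independent set of G if and only if X ∪ V'' is a general position set of G̃. -/

import Mathlib

/-!
Every vertex of `G̃` lies in the clique `V'` or is adjacent to it, so `G̃` has diameter at most 3.
If `X` is independent in `G`, then `X ∪ V''` is independent in `G̃`, so distinct vertices of it are
at distance 2 or 3, and no such distance is the sum of two others. Conversely, if `u, w ∈ X` are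
adjacent, then `u'', u, w` lie on a geodesic: `d(u'', u) = 2`, while `d(u'', w) = 3` because the
only neighbour of `u''` is `u'`, which is not adjacent to `w`.
-/

open SimpleGraph

/-- `S` is a general position set of `G`: no three distinct vertices of `S`
lie on a common geodesic. -/
def IsGPSet {V : Type*} (G : SimpleGraph V) (S : Set V) : Prop :=
  ∀ x ∈ S, ∀ y ∈ S, ∀ z ∈ S, x ≠ y → y ≠ z → x ≠ z →
    G.dist x z ≠ G.dist x y + G.dist y z

/-- The general position number of `G`. -/
noncomputable def gpNumber {V : Type*} (G : SimpleGraph V) : ℕ :=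
  sSup {n | ∃ S : Set V, IsGPSet G S ∧ S.Finite ∧ S.ncard = n}

/-- The graph `G̃` of the NP-completeness reduction: vertex set `V ⊕ V' ⊕ V''`
(with `V' = Sum.inr ∘ Sum.inl` a clique copy of `V` and `V'' = Sum.inr ∘ Sum.inr`
an independent copy of `V`), keeping the edges of `G` on `V`, all edges inside
`V'`, and the matchings `v v'` and `v' v''`. -/
def tildeGraph {V : Type*} (G : SimpleGraph V) : SimpleGraph (V ⊕ (V ⊕ V)) :=
  SimpleGraph.fromRel (fun a b =>
    match a, b with
    | Sum.inl u, Sum.inl v => G.Adj u v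
    | Sum.inl u, Sum.inr (Sum.inl v) => u = v
    | Sum.inr (Sum.inl u), Sum.inr (Sum.inl v) => u ≠ v
    | Sum.inr (Sum.inl u), Sum.inr (Sum.inr v) => u = v
    | _, _ => False)

section

variable {W : Type*} {H : SimpleGraph W}

theorem IsGPSet.of_dist_mem_Ico {S : Set W} {k : ℕ}
    (h : ∀ a ∈ S, ∀ b ∈ S, a ≠ b → H.dist a b ∈ Set.Ico k (2 * k)) : IsGPSet H S := by
  intro x hx y hy z hz hxy hyz hxz
  have hxy' := h x hx y hy hxy
  have hyz' := h y hy z hz hyz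
  have hxz' := h x hx z hz hxz
  simp only [Set.mem_Ico] at hxy' hyz' hxz'
  omega

theorem SimpleGraph.IsClique.edist_le_three {K : Set W} (hK : H.IsClique K)
    (hdom : ∀ v, ∃ c ∈ K, H.edist v c ≤ 1) (a b : W) : H.edist a b ≤ 3 := by
  obtain ⟨c, hc, hac⟩ := hdom a
  obtain ⟨d, hd, hbd⟩ := hdom b
  have hcd : H.edist c d ≤ 1 := by
    rw [edist_le_one_iff_adj_or_eq]
    by_cases h : c = d
    · exact Or.inr h
    · exact Or.inl (hK hc hd h)
  calc H.edist a b ≤ H.edist a c + H.edist c d + H.edist d b :=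
        H.edist_triangle.trans (add_le_add_left H.edist_triangle _)
    _ ≤ 1 + 1 + 1 := by rw [edist_comm (u := d)]; gcongr
    _ = 3 := by norm_num

theorem SimpleGraph.Adj.dist_eq_add_of_dist_lt {x y z : W} (hyz : H.Adj y z)
    (h : H.dist x y < H.dist x z) : H.dist x z = H.dist x y + H.dist y z := by
  have := hyz.reachable.dist_triangle_right x
  rw [dist_eq_one_iff_adj.mpr hyz] at this ⊢
  omega

end

namespace TildeGraph

open Sum

variable {V : Type*} {G : SimpleGraph V}

theorem adj_inl_inl {u w : V} : (tildeGraph G).Adj (inl u) (inl w) ↔ G.Adj u w := by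
  simp only [tildeGraph, fromRel_adj, ne_eq, inl.injEq]
  exact ⟨fun ⟨_, h⟩ => h.elim id fun h => h.symm, fun h => ⟨h.ne, Or.inl h⟩⟩

theorem adj_inr_inr {u : V} (b : V ⊕ (V ⊕ V)) :
    (tildeGraph G).Adj (inr (inr u)) b ↔ b = inr (inl u) := by
  rcases b with v | v | v <;> simp [tildeGraph, eq_comm]

theorem isClique_range_inr_inl : (tildeGraph G).IsClique (Set.range (inr ∘ inl)) := by
  rintro _ ⟨u, rfl⟩ _ ⟨w, rfl⟩ h
  have huw : u ≠ w := by rintro rfl; exact h rfl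
  simp [tildeGraph, huw]

theorem edist_le_three (a b : V ⊕ (V ⊕ V)) : (tildeGraph G).edist a b ≤ 3 := by
  refine isClique_range_inr_inl.edist_le_three (fun v => ?_) a b
  rcases v with u | u | u <;> refine ⟨inr (inl u), ⟨u, rfl⟩, ?_⟩ <;>
    simp [edist_le_one_iff_adj_or_eq, tildeGraph]

theorem reachable (a b : V ⊕ (V ⊕ V)) : (tildeGraph G).Reachable a b :=
  reachable_of_edist_ne_top (ne_top_of_le_ne_top (by decide) (edist_le_three a b))

theorem dist_le_three (a b : V ⊕ (V ⊕ V)) : (tildeGraph G).dist a b ≤ 3 :=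
  ENat.toNat_le_of_le_natCast (edist_le_three a b)

theorem dist_inr_inr_inl_le_two (u : V) : (tildeGraph G).dist (inr (inr u)) (inl u) ≤ 2 := by
  have hu'' : (tildeGraph G).Adj (inr (inr u)) (inr (inl u)) := by simp [tildeGraph]
  have hu' : (tildeGraph G).Adj (inr (inl u)) (inl u) := by simp [tildeGraph]
  simpa using dist_le (.cons hu'' (.cons hu' .nil))

theorem three_le_dist_inr_inr_inl {u w : V} (h : u ≠ w) :
    3 ≤ (tildeGraph G).dist (inr (inr u)) (inl w) := by
  have : 2 < (tildeGraph G).edist (inr (inr u)) (inl w) := by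
    refine two_lt_edist_iff.mpr ⟨by simp, by simp [adj_inr_inr], ?_⟩
    refine Set.eq_empty_iff_forall_notMem.mpr fun c hc => ?_
    obtain ⟨hc'', hc⟩ := (mem_commonNeighbors _).mp hc
    rw [adj_inr_inr] at hc''
    subst hc''
    exact h (by simpa [tildeGraph, eq_comm] using hc)
  rw [← (reachable _ _).coe_dist_eq_edist] at this
  exact_mod_cast this

theorem pairwise_not_adj {X : Set V} (hX : X.Pairwise fun u v => ¬ G.Adj u v) :
    (Sum.inl '' X ∪ Set.range (inr ∘ inr)).Pairwise fun a b => ¬ (tildeGraph G).Adj a b := by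
  rintro _ (⟨u, hu, rfl⟩ | ⟨u, rfl⟩) _ (⟨w, hw, rfl⟩ | ⟨w, rfl⟩) hne
  · exact adj_inl_inl.not.mpr (hX hu hw (by rintro rfl; exact hne rfl))
  all_goals simp [tildeGraph]

end TildeGraph

open TildeGraph in
theorem indep_iff_gp_tilde_general {V : Type*} (G : SimpleGraph V) (X : Set V) :
    X.Pairwise (fun u v => ¬ G.Adj u v) ↔
      IsGPSet (tildeGraph G)
        ((Sum.inl '' X) ∪ (Set.range (Sum.inr ∘ Sum.inr))) := by
  constructor
  · intro hX
    refine IsGPSet.of_dist_mem_Ico (k := 2) fun a ha b hb hab => ⟨?_, ?_⟩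
    · exact (reachable a b).one_lt_dist_of_ne_of_not_adj hab (pairwise_not_adj hX ha hb hab)
    · exact Nat.lt_succ_of_le (dist_le_three a b)
  · intro hS u hu w hw huw hadj
    have hd := (adj_inl_inl.mpr hadj).dist_eq_add_of_dist_lt
      ((dist_inr_inr_inl_le_two u).trans_lt (three_le_dist_inr_inr_inl huw))
    exact hS _ (.inr ⟨u, rfl⟩) _ (.inl ⟨u, hu, rfl⟩) _ (.inl ⟨w, hw, rfl⟩)
      (by simp) (by simpa using huw) (by simp) hd

theorem indep_iff_gp_tilde {V : Type*} [Nonempty V] (G : SimpleGraph V) (X : Set V) :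
    X.Pairwise (fun u v => ¬ G.Adj u v) ↔
      IsGPSet (tildeGraph G)
        ((Sum.inl '' X) ∪ (Set.range (Sum.inr ∘ Sum.inr))) :=
  indep_iff_gp_tilde_general G X
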